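/- Let A = (a_1,...,a_m)^T ∈ C^{m×d}. Then A is not phase retrievable on C^d if and only if there exists a nonzero Hermitian matrix Q ∈ C^{d×d} with rank(Q) ≤ 2 such that Tr(a_j a_j^* Q) = 0 for all j = 1,...,m. -/

import Mathlib

/-!
If `‖⟪a j, x⟫‖ = ‖⟪a j, y⟫‖` for all `j`, then `Q = x xᴴ - y yᴴ` is Hermitian of rank at most two
with `a jᴴ Q a j = 0`, and `Q = 0` forces `y = c x` with `‖c‖ = 1`.

Conversely, expand `a jᴴ Q a j = ∑ k, μ k * ‖⟪a j, u k⟫‖ ^ 2` in an orthonormal eigenbasis of `Q`.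
If `Q` has eigenvalues `μ p > 0 > μ q`, the rank bound kills all others, so `Q = x xᴴ - y yᴴ` with
`x = √(μ p) u p` and `y = √(-μ q) u q`; these are orthogonal and `y ≠ 0`, so they do not differ by
a phase. Otherwise all terms of the sum have the sign of some `μ i ≠ 0`, so `u i` is orthogonal to
every `a j` and cannot be told apart from `0`.
-/

open Matrix
open scoped ComplexOrder

namespace Matrix

variable {R m n : Type*}

theorem isHermitian_vecMulVec_star [Mul R] [StarMul R] (x : n → R) :
    (vecMulVec x (star x)).IsHermitian := by
  rw [IsHermitian, conjTranspose_vecMulVec, star_star]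

theorem trace_vecMulVec_mul [Fintype n] [CommSemiring R] (a b : n → R) (Q : Matrix n n R) :
    trace (vecMulVec a b * Q) = b ⬝ᵥ Q *ᵥ a := by
  rw [vecMulVec_mul, trace_vecMulVec, dotProduct_comm, dotProduct_mulVec]

theorem rank_sub_le [Fintype n] [Field R] (A B : Matrix m n R) : (A - B).rank ≤ A.rank + B.rank := by
  refine (Submodule.finrank_mono ?_).trans (Submodule.finrank_add_le_finrank_add_finrank _ _)
  rintro _ ⟨v, rfl⟩
  rw [mulVecLin_apply, sub_mulVec]
  exact Submodule.sub_mem_sup ⟨v, rfl⟩ ⟨v, rfl⟩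

end Matrix

section RCLike

variable {𝕜 ι n : Type*} [RCLike 𝕜] [Fintype n]

theorem star_dotProduct_vecMulVec_star_mulVec (a x : n → 𝕜) :
    star a ⬝ᵥ vecMulVec x (star x) *ᵥ a = (‖star a ⬝ᵥ x‖ : 𝕜) ^ 2 := by
  rw [vecMulVec_mulVec, op_smul_eq_smul, dotProduct_smul, smul_eq_mul, star_dotProduct,
    mul_comm, RCLike.star_def, RCLike.mul_conj]

theorem exists_norm_eq_one_smul_of_vecMulVec_star_eq {x y : n → 𝕜}
    (h : vecMulVec x (star x) = vecMulVec y (star y)) :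
    ∃ c : 𝕜, ‖c‖ = 1 ∧ y = c • x := by
  by_cases hy : y = 0
  · have hx : x = 0 := by simpa [hy] using h
    exact ⟨1, norm_one, by rw [hx, hy, smul_zero]⟩
  have hs : star y ⬝ᵥ y ≠ 0 := dotProduct_star_self_eq_zero.not.mpr hy
  have hxy : (star x ⬝ᵥ y) • x = (star y ⬝ᵥ y) • y := by
    simpa [vecMulVec_mulVec] using congr($h *ᵥ y)
  have hnorm : ‖star y ⬝ᵥ x‖ = ‖star y ⬝ᵥ y‖ := by
    have := congr(star y ⬝ᵥ $h *ᵥ y)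
    rw [star_dotProduct_vecMulVec_star_mulVec, star_dotProduct_vecMulVec_star_mulVec] at this
    exact (pow_left_inj₀ (norm_nonneg _) (norm_nonneg _) two_ne_zero).mp (by exact_mod_cast this)
  refine ⟨(star x ⬝ᵥ y) / (star y ⬝ᵥ y), ?_, ?_⟩
  · rw [norm_div, star_dotProduct, norm_star, hnorm, div_self (norm_ne_zero_iff.mpr hs)]
  · rw [div_eq_inv_mul, mul_smul, hxy, inv_smul_smul₀ hs]

namespace Matrix.IsHermitian

variable [DecidableEq n] {Q : Matrix n n 𝕜}

theorem eq_sum_vecMulVec_eigenvectorBasis (hQ : Q.IsHermitian) :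
    Q = ∑ i, (hQ.eigenvalues i : 𝕜) •
      vecMulVec ⇑(hQ.eigenvectorBasis i) (star ⇑(hQ.eigenvectorBasis i)) := by
  conv_lhs => rw [hQ.spectral_theorem, Unitary.conjStarAlgAut_apply]
  ext i j
  simp only [mul_apply, eigenvectorUnitary_apply, diagonal_apply, Function.comp_apply, mul_ite,
    mul_zero, Finset.sum_ite_eq', Finset.mem_univ, ↓reduceIte, star_apply, RCLike.star_def,
    sum_apply, smul_apply, vecMulVec_apply, Pi.star_apply]
  exact Finset.sum_congr rfl fun k _ => by ring

theorem star_dotProduct_mulVec_eq_sum (hQ : Q.IsHermitian) (v : n → 𝕜) :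
    star v ⬝ᵥ Q *ᵥ v =
      ((∑ i, hQ.eigenvalues i * ‖star v ⬝ᵥ ⇑(hQ.eigenvectorBasis i)‖ ^ 2 : ℝ) : 𝕜) := by
  conv_lhs => rw [hQ.eq_sum_vecMulVec_eigenvectorBasis]
  simp only [sum_mulVec, smul_mulVec, dotProduct_sum, dotProduct_smul,
    star_dotProduct_vecMulVec_star_mulVec]
  push_cast
  simp only [smul_eq_mul]

theorem eigenvalues_eq_zero_of_rank_le_two (hQ : Q.IsHermitian) (hrank : Q.rank ≤ 2)
    {p q : n} (hpq : p ≠ q) (hp : hQ.eigenvalues p ≠ 0) (hq : hQ.eigenvalues q ≠ 0)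
    {k : n} (hkp : k ≠ p) (hkq : k ≠ q) : hQ.eigenvalues k = 0 := by
  by_contra hk
  have hsub : ({p, q, k} : Finset n) ⊆ Finset.univ.filter (hQ.eigenvalues · ≠ 0) := by
    simp [Finset.insert_subset_iff, hp, hq, hk]
  have := (Finset.card_le_card hsub).trans_eq (Fintype.card_subtype _).symm
  rw [Finset.card_eq_three.mpr ⟨p, q, k, hpq, hkp.symm, hkq.symm, rfl⟩,
    ← hQ.rank_eq_card_non_zero_eigs] at this
  omega

end Matrix.IsHermitian

def PhaseRetrievable (a : ι → n → 𝕜) : Prop :=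
  ∀ x y : n → 𝕜, (∀ j, ‖star (a j) ⬝ᵥ x‖ = ‖star (a j) ⬝ᵥ y‖) → ∃ c : 𝕜, ‖c‖ = 1 ∧ y = c • x

variable {a : ι → n → 𝕜}

theorem not_phaseRetrievable_of_orthogonal {x y : n → 𝕜} (hy : y ≠ 0)
    (hxy : star y ⬝ᵥ x = 0) (h : ∀ j, ‖star (a j) ⬝ᵥ x‖ = ‖star (a j) ⬝ᵥ y‖) :
    ¬ PhaseRetrievable a := by
  intro hPR
  obtain ⟨c, -, hyx⟩ := hPR x y h
  refine hy (dotProduct_star_self_eq_zero.mp ?_)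
  calc star y ⬝ᵥ y = star y ⬝ᵥ (c • x) := by rw [← hyx]
    _ = 0 := by rw [dotProduct_smul, hxy, smul_zero]

theorem exists_isHermitian_of_not_phaseRetrievable (h : ¬ PhaseRetrievable a) :
    ∃ Q : Matrix n n 𝕜, Q.IsHermitian ∧ Q ≠ 0 ∧ Q.rank ≤ 2 ∧
      ∀ j, star (a j) ⬝ᵥ Q *ᵥ a j = 0 := by
  simp only [PhaseRetrievable, not_forall, not_exists, not_and] at h
  obtain ⟨x, y, hxy, hne⟩ := h
  refine ⟨vecMulVec x (star x) - vecMulVec y (star y),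
    (isHermitian_vecMulVec_star x).sub (isHermitian_vecMulVec_star y), ?_, ?_, fun j => ?_⟩
  · intro h0
    obtain ⟨c, hc, hyx⟩ := exists_norm_eq_one_smul_of_vecMulVec_star_eq (sub_eq_zero.mp h0)
    exact hne c hc hyx
  · exact (rank_sub_le _ _).trans (add_le_add (rank_vecMulVec_le _ _) (rank_vecMulVec_le _ _))
  · rw [sub_mulVec, dotProduct_sub, star_dotProduct_vecMulVec_star_mulVec,
      star_dotProduct_vecMulVec_star_mulVec, hxy j, sub_self]

section Eigen

variable [DecidableEq n] {Q : Matrix n n 𝕜}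

theorem not_phaseRetrievable_of_eigenvalues_pos_of_neg (hQ : Q.IsHermitian) (hrank : Q.rank ≤ 2)
    (h : ∀ j, star (a j) ⬝ᵥ Q *ᵥ a j = 0) {p q : n} (hp : 0 < hQ.eigenvalues p)
    (hq : hQ.eigenvalues q < 0) : ¬ PhaseRetrievable a := by
  set μ := hQ.eigenvalues
  set u : n → n → 𝕜 := fun i => ⇑(hQ.eigenvectorBasis i)
  have hpq : p ≠ q := by rintro rfl; linarith
  have hsum (j : ι) : μ p * ‖star (a j) ⬝ᵥ u p‖ ^ 2 + μ q * ‖star (a j) ⬝ᵥ u q‖ ^ 2 = 0 := by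
    rw [← Fintype.sum_eq_add (f := fun k => μ k * ‖star (a j) ⬝ᵥ u k‖ ^ 2) p q hpq
      fun k ⟨hkp, hkq⟩ => mul_eq_zero_of_left
        (hQ.eigenvalues_eq_zero_of_rank_le_two hrank hpq hp.ne' hq.ne hkp hkq) _]
    exact_mod_cast (hQ.star_dotProduct_mulVec_eq_sum (a j)).symm.trans (h j)
  refine not_phaseRetrievable_of_orthogonal (x := (√(μ p) : 𝕜) • u p) (y := (√(-μ q) : 𝕜) • u q)
    (smul_ne_zero ?_ ((WithLp.ofLp_eq_zero 2).ne.2 (hQ.eigenvectorBasis.orthonormal.ne_zero q)))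
    ?_ fun j => ?_
  · exact RCLike.ofReal_ne_zero.mpr (Real.sqrt_ne_zero'.mpr (neg_pos.mpr hq))
  · have horth : star (u q) ⬝ᵥ u p = 0 := by
      rw [dotProduct_comm, ← EuclideanSpace.inner_eq_star_dotProduct]
      exact hQ.eigenvectorBasis.orthonormal.2 hpq.symm
    rw [star_smul, smul_dotProduct, dotProduct_smul, horth, smul_zero, smul_zero]
  · simp only [dotProduct_smul, smul_eq_mul, norm_mul, RCLike.norm_ofReal,
      abs_of_nonneg (Real.sqrt_nonneg _)]
    refine (pow_left_inj₀ (by positivity) (by positivity) two_ne_zero).mp ?_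
    rw [mul_pow, mul_pow, Real.sq_sqrt hp.le, Real.sq_sqrt (neg_nonneg.mpr hq.le)]
    linarith [hsum j]

theorem not_phaseRetrievable_of_eigenvalues_same_sign (hQ : Q.IsHermitian)
    (h : ∀ j, star (a j) ⬝ᵥ Q *ᵥ a j = 0) {i : n} (hi : hQ.eigenvalues i ≠ 0)
    (hsign : ∀ k, 0 ≤ hQ.eigenvalues i * hQ.eigenvalues k) : ¬ PhaseRetrievable a := by
  set μ := hQ.eigenvalues
  set u : n → n → 𝕜 := fun k => ⇑(hQ.eigenvectorBasis k)
  refine not_phaseRetrievable_of_orthogonal (x := 0) (y := u i)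
    ((WithLp.ofLp_eq_zero 2).ne.2 (hQ.eigenvectorBasis.orthonormal.ne_zero i))
    (dotProduct_zero _) fun j => ?_
  have hform : ∑ k, μ k * ‖star (a j) ⬝ᵥ u k‖ ^ 2 = 0 := by
    exact_mod_cast (hQ.star_dotProduct_mulVec_eq_sum (a j)).symm.trans (h j)
  -- After multiplying by `μ i`, every term of the vanishing sum is nonnegative.
  have hterm := (Finset.sum_eq_zero_iff_of_nonneg fun k _ =>
    mul_nonneg (hsign k) (sq_nonneg ‖star (a j) ⬝ᵥ u k‖)).mp
      (by simp only [mul_assoc, ← Finset.mul_sum, hform, mul_zero]) i (Finset.mem_univ i)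
  rw [dotProduct_zero, norm_zero, eq_comm]
  simpa [hi] using hterm

theorem not_phaseRetrievable_of_isHermitian (hQ : Q.IsHermitian) (hQ0 : Q ≠ 0)
    (hrank : Q.rank ≤ 2) (h : ∀ j, star (a j) ⬝ᵥ Q *ᵥ a j = 0) : ¬ PhaseRetrievable a := by
  obtain ⟨i, hi⟩ : ∃ i, hQ.eigenvalues i ≠ 0 := by
    by_contra! hzero
    exact hQ0 (hQ.eigenvalues_eq_zero_iff.mp (funext hzero))
  by_cases hmix : ∃ p q, 0 < hQ.eigenvalues p ∧ hQ.eigenvalues q < 0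
  · obtain ⟨p, q, hp, hq⟩ := hmix
    exact not_phaseRetrievable_of_eigenvalues_pos_of_neg hQ hrank h hp hq
  push Not at hmix
  refine not_phaseRetrievable_of_eigenvalues_same_sign hQ h hi fun k => ?_
  rcases hi.lt_or_gt with hneg | hpos
  · exact mul_nonneg_of_nonpos_of_nonpos hneg.le (not_lt.mp fun hk => (hmix k i hk).not_gt hneg)
  · exact mul_nonneg hpos.le (hmix i k hpos)

end Eigen

theorem not_phaseRetrievable_iff [DecidableEq n] :
    ¬ PhaseRetrievable a ↔ ∃ Q : Matrix n n 𝕜, Q.IsHermitian ∧ Q ≠ 0 ∧ Q.rank ≤ 2 ∧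
      ∀ j, star (a j) ⬝ᵥ Q *ᵥ a j = 0 :=
  ⟨exists_isHermitian_of_not_phaseRetrievable,
    fun ⟨_, hQ, hQ0, hrank, h⟩ => not_phaseRetrievable_of_isHermitian hQ hQ0 hrank h⟩

end RCLike

theorem stmt_5 {m d : ℕ} (a : Fin m → Fin d → ℂ) :
    (¬ ∀ x y : Fin d → ℂ,
        (∀ j, ‖dotProduct (star (a j)) x‖ =
              ‖dotProduct (star (a j)) y‖) →
        ∃ c : ℂ, ‖c‖ = 1 ∧ y = c • x)
    ↔ ∃ Q : Matrix (Fin d) (Fin d) ℂ, Q.IsHermitian ∧ Q ≠ 0 ∧ Q.rank ≤ 2 ∧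
        ∀ j, Matrix.trace (Matrix.vecMulVec (a j) (star (a j)) * Q) = 0 := by
  simp_rw [trace_vecMulVec_mul]
  exact not_phaseRetrievable_iff
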